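/- Let M be a complete discrete valuation field of mixed characteristic (0, p) containing a primitive p-th root of unity ζ_p, with valuation ring O_M. Then the map x ↦ 1 + (ζ_p − 1)^p·x induces a group isomorphism from the additive group (ζ_p − 1)^{−1}O_M / O_M onto the multiplicative group (1 + pO_M)/(1 + (ζ_p − 1)^p·O_M). -/

import Mathlib

/-!
The cyclotomic input is `v((ζ - 1)^(p - 1)) = v(p)`: `p = ∏_{0<k<p} (1 - ζ^k)` and every factor
is a unit multiple of `1 - ζ`. With `π = ζ - 1` and `s = π^p` this says `s·π⁻¹𝒪 = p𝒪`, so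
`x ↦ 1 + s x` maps `π⁻¹𝒪` onto `1 + p𝒪`. Modulo `1 + s𝒪` the map is additive, because
`(1 + s x)(1 + s y) - (1 + s(x + y)) = s·(s x y)` and `s x y = π^(p-2)·(π x)·(π y)` is integral;
and `1 + s x ∈ 1 + s𝒪` exactly when `x ∈ 𝒪`.
-/

noncomputable section

open IsLocalRing Multiplicative

local notation "ℤₘ₀" => WithZero (Multiplicative ℤ)

variable {M : Type*} [Field M]

/-- The additive subgroup `(ζ - 1)⁻¹ 𝒪_M` of `M`. -/
def scaledIntegers (vM : Valuation M ℤₘ₀) (ζ : M) : AddSubgroup M where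
  carrier := {x : M | vM ((ζ - 1) * x) ≤ 1}
  zero_mem' := by simp
  add_mem' := by
    intro a b ha hb
    have h : vM ((ζ - 1) * (a + b)) ≤ max (vM ((ζ - 1) * a)) (vM ((ζ - 1) * b)) := by
      rw [mul_add]; exact vM.map_add _ _
    exact le_trans h (max_le ha hb)
  neg_mem' := by
    intro a ha
    simpa [mul_neg] using ha

/-- `𝒪_M` as an additive subgroup of `M`. -/
def integersAddSubgroup (vM : Valuation M ℤₘ₀) : AddSubgroup M :=
  vM.valuationSubring.toSubring.toAddSubgroup

/-- The subgroup `1 + t 𝒪_M` of the unit group of the valuation ring `𝒪_M`. -/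
def onePlusIdeal (vM : Valuation M ℤₘ₀) (t : vM.valuationSubring) :
    Subgroup (vM.valuationSubring)ˣ where
  carrier := {u | ∃ a : vM.valuationSubring, (u : vM.valuationSubring) = 1 + t * a}
  one_mem' := ⟨0, by simp⟩
  mul_mem' := by
    rintro u v ⟨a, ha⟩ ⟨b, hb⟩
    exact ⟨a + b + t * (a * b), by rw [Units.val_mul, ha, hb]; ring⟩
  inv_mem' := by
    rintro u ⟨a, ha⟩
    refine ⟨-a * ↑u⁻¹, ?_⟩
    have h1 : (u : vM.valuationSubring) * ((u⁻¹ : (vM.valuationSubring)ˣ) : vM.valuationSubring) = 1 :=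
      Units.mul_inv u
    have h2 : (u : vM.valuationSubring) *
        (1 + t * (-a * ((u⁻¹ : (vM.valuationSubring)ˣ) : vM.valuationSubring))) = 1 := by
      have h3 : (u : vM.valuationSubring) *
          (1 + t * (-a * ((u⁻¹ : (vM.valuationSubring)ˣ) : vM.valuationSubring)))
          = ↑u - t * a * (↑u * ↑u⁻¹) := by ring
      rw [h3, h1, ha]; ring
    exact (mul_left_cancel₀ (Units.ne_zero u) (h2.trans h1.symm)).symm

section Cyclotomic

variable {Γ₀ : Type*} [LinearOrderedCommGroupWithZero Γ₀] (v : Valuation M Γ₀)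

theorem Valuation.map_pow_sub_one_le {ζ : M} (hζ : v ζ ≤ 1) (m : ℕ) :
    v (ζ ^ m - 1) ≤ v (ζ - 1) := by
  rw [← geom_sum_mul, map_mul]
  refine mul_le_of_le_one_left' (v.map_sum_le fun i _ => ?_)
  rw [map_pow]
  exact pow_le_one' hζ i

variable {v}

theorem IsPrimitiveRoot.valuation_pow_sub_one_eq {ζ : M} {n m : ℕ} (hζ : IsPrimitiveRoot ζ n)
    (hζv : v ζ ≤ 1) (hm : m.Coprime n) : v (ζ ^ m - 1) = v (ζ - 1) := by
  obtain rfl | hn := eq_or_ne n 0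
  · rw [(Nat.coprime_zero_right m).1 hm, pow_one]
  have : NeZero n := ⟨hn⟩
  refine le_antisymm (v.map_pow_sub_one_le hζv m) ?_
  obtain ⟨b, -, hb⟩ := (hζ.pow_of_coprime m hm).eq_pow_of_pow_eq_one hζ.pow_eq_one
  calc v (ζ - 1) = v ((ζ ^ m) ^ b - 1) := by rw [hb]
    _ ≤ v (ζ ^ m - 1) := v.map_pow_sub_one_le (by rw [map_pow]; exact pow_le_one' hζv m) b

theorem IsPrimitiveRoot.valuation_sub_one_pow_eq {ζ : M} {p : ℕ} (hp : p.Prime)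
    (hζ : IsPrimitiveRoot ζ p) (hζv : v ζ ≤ 1) : v ((ζ - 1) ^ (p - 1)) = v (p : M) := by
  obtain ⟨n, rfl⟩ : ∃ n, p = n + 1 := ⟨p - 1, (Nat.sub_add_cancel hp.one_le).symm⟩
  have hfactor : ∀ k ∈ Finset.range n, v (1 - ζ ^ (k + 1)) = v (ζ - 1) := fun k hk => by
    rw [v.map_sub_swap]
    refine hζ.valuation_pow_sub_one_eq hζv (Nat.coprime_comm.1 ?_)
    exact Nat.coprime_of_lt_prime k.succ_ne_zero (by simpa using hk) hp
  rw [Nat.cast_succ, ← hζ.prod_one_sub_pow_eq_order, map_prod, Finset.prod_congr rfl hfactor,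
    Finset.prod_const, Finset.card_range, map_pow, Nat.add_sub_cancel]

end Cyclotomic

section OnePlusIdeal

variable (v : Valuation M ℤₘ₀)

theorem Valuation.map_coe_unit_valuationSubring (u : (v.valuationSubring)ˣ) : v (u : M) = 1 :=
  (Valuation.integer.integers v).one_of_isUnit u.isUnit

theorem Valuation.coe_inv_unit_valuationSubring (u : (v.valuationSubring)ˣ) :
    (((u⁻¹ : (v.valuationSubring)ˣ) : v.valuationSubring) : M) = (u : M)⁻¹ :=
  map_units_inv v.valuationSubring.subtype u

def onePlusUnit {y : M} (hy : v y < 1) : (v.valuationSubring)ˣ :=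
  IsUnit.unit (a := ⟨1 + y, (v.map_one_add_of_lt hy).le⟩)
    ((Valuation.integer.integers v).isUnit_of_one' (v.map_one_add_of_lt hy))

@[simp]
theorem coe_onePlusUnit {y : M} (hy : v y < 1) :
    ((onePlusUnit v hy : v.valuationSubring) : M) = 1 + y :=
  rfl

variable {v}

theorem mem_onePlusIdeal_iff {t : v.valuationSubring} {u : (v.valuationSubring)ˣ} :
    u ∈ onePlusIdeal v t ↔ v ((u : M) - 1) ≤ v (t : M) := by
  refine ⟨fun ⟨a, ha⟩ => ?_, fun h => ?_⟩
  · rw [ha, Subring.coe_add, Subring.coe_mul, OneMemClass.coe_one, add_sub_cancel_left, map_mul]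
    exact mul_le_of_le_one_right' a.2
  obtain ht | ht := eq_or_ne (t : M) 0
  · rw [ht, map_zero, le_zero_iff, map_eq_zero, sub_eq_zero] at h
    exact ⟨0, Subtype.ext (by simp [h])⟩
  refine ⟨⟨((u : M) - 1) / t, ?_⟩, Subtype.ext ?_⟩
  · rw [Valuation.mem_valuationSubring_iff, map_div₀]
    exact div_le_one_of_le₀ h zero_le
  · simp [mul_div_cancel₀ _ ht]

theorem onePlusIdeal.mk_eq_mk_iff {t s : v.valuationSubring} {u w : onePlusIdeal v t} :
    (QuotientGroup.mk u : onePlusIdeal v t ⧸ (onePlusIdeal v s).subgroupOf (onePlusIdeal v t)) =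
        QuotientGroup.mk w ↔
      v (((w : (v.valuationSubring)ˣ) : M) - (u : (v.valuationSubring)ˣ)) ≤ v (s : M) := by
  have hu : (((u : (v.valuationSubring)ˣ) : v.valuationSubring) : M) ≠ 0 := by simp
  rw [QuotientGroup.eq, Subgroup.mem_subgroupOf, mem_onePlusIdeal_iff, Subgroup.coe_mul,
    Subgroup.coe_inv, Units.val_mul, Subring.coe_mul, v.coe_inv_unit_valuationSubring,
    ← inv_mul_cancel₀ hu, ← mul_sub, map_mul, map_inv₀, v.map_coe_unit_valuationSubring,
    inv_one, one_mul]

end OnePlusIdeal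

section QuotientIso

variable {v : Valuation M ℤₘ₀} {ζ t : v.valuationSubring} {n : ℕ}

theorem valuation_sub_one_pow_succ_mul_le (hvt : v (((ζ : M) - 1) ^ n) = v (t : M)) {x : M}
    (hx : x ∈ scaledIntegers v ζ) : v (((ζ : M) - 1) ^ (n + 1) * x) ≤ v (t : M) := by
  rw [pow_succ, mul_assoc, map_mul, hvt]
  exact mul_le_of_le_one_right' hx

theorem mul_div_sub_one_pow_succ_mem_scaledIntegers (hvt : v (((ζ : M) - 1) ^ n) = v (t : M))
    (hζ : (ζ : M) ≠ 1) (a : v.valuationSubring) :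
    (t : M) * a / ((ζ : M) - 1) ^ (n + 1) ∈ scaledIntegers v ζ := by
  have hπ : (ζ : M) - 1 ≠ 0 := sub_ne_zero.2 hζ
  have ht : v (t : M) ≠ 0 := by rw [← hvt]; simp [hπ]
  have hcancel : ((ζ : M) - 1) * ((t : M) * a / ((ζ : M) - 1) ^ (n + 1)) =
      (t : M) * a / ((ζ : M) - 1) ^ n := by
    field_simp
    ring
  change v (((ζ : M) - 1) * _) ≤ 1
  rw [hcancel, map_div₀, map_mul, hvt, mul_div_cancel_left₀ _ ht]
  exact a.2

variable (hvt : v (((ζ : M) - 1) ^ n) = v (t : M)) (ht : v (t : M) < 1)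

def toOnePlusIdeal (x : scaledIntegers v ζ) : onePlusIdeal v t :=
  ⟨onePlusUnit v ((valuation_sub_one_pow_succ_mul_le hvt x.2).trans_lt ht), by
    rw [mem_onePlusIdeal_iff, coe_onePlusUnit, add_sub_cancel_left]
    exact valuation_sub_one_pow_succ_mul_le hvt x.2⟩

@[simp]
theorem coe_toOnePlusIdeal (x : scaledIntegers v ζ) :
    (((toOnePlusIdeal hvt ht x : (v.valuationSubring)ˣ) : v.valuationSubring) : M) =
      1 + ((ζ : M) - 1) ^ (n + 1) * x :=
  rfl

theorem toOnePlusIdeal_eq_iff (x : scaledIntegers v ζ) (u : onePlusIdeal v t) :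
    toOnePlusIdeal hvt ht x = u ↔
      (((u : (v.valuationSubring)ˣ) : v.valuationSubring) : M) =
        1 + ((ζ : M) - 1) ^ (n + 1) * x := by
  rw [← coe_toOnePlusIdeal hvt ht, eq_comm, Subtype.ext_iff, Units.ext_iff, Subtype.ext_iff]

theorem mk_toOnePlusIdeal_add (hn : 1 ≤ n) (x y : scaledIntegers v ζ) :
    (QuotientGroup.mk (toOnePlusIdeal hvt ht (x + y)) :
        onePlusIdeal v t ⧸ (onePlusIdeal v ((ζ - 1) ^ (n + 1))).subgroupOf (onePlusIdeal v t)) =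
      QuotientGroup.mk (toOnePlusIdeal hvt ht x * toOnePlusIdeal hvt ht y) := by
  obtain ⟨m, rfl⟩ := Nat.exists_eq_add_of_le' hn
  rw [onePlusIdeal.mk_eq_mk_iff, Subgroup.coe_mul, Units.val_mul, Subring.coe_mul,
    coe_toOnePlusIdeal, coe_toOnePlusIdeal, coe_toOnePlusIdeal, AddSubgroup.coe_add]
  set π : M := (ζ : M) - 1
  have hπ : v π ≤ 1 := v.map_sub_le ζ.2 (v.map_one).le
  calc _ = v (π ^ (m + 1 + 1) * (π ^ m * ((π * x) * (π * y)))) := by ring_nf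
    _ ≤ v (π ^ (m + 1 + 1)) := by
      rw [map_mul]
      refine mul_le_of_le_one_right' ?_
      rw [map_mul, map_mul, map_pow]
      exact mul_le_one' (pow_le_one' hπ m) (mul_le_one' x.2 y.2)
    _ = _ := by push_cast; rfl

def toQuotientOnePlusIdeal (hn : 1 ≤ n) : scaledIntegers v ζ →+
      Additive (onePlusIdeal v t ⧸
        (onePlusIdeal v ((ζ - 1) ^ (n + 1))).subgroupOf (onePlusIdeal v t)) :=
  AddMonoidHom.mk' (fun x => Additive.ofMul (QuotientGroup.mk (toOnePlusIdeal hvt ht x)))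
    fun x y =>
      congrArg Additive.ofMul
        ((mk_toOnePlusIdeal_add hvt ht hn x y).trans (QuotientGroup.mk_mul _ _ _))

theorem toQuotientOnePlusIdeal_apply (hn : 1 ≤ n) (x : scaledIntegers v ζ) :
    toQuotientOnePlusIdeal hvt ht hn x =
      Additive.ofMul (QuotientGroup.mk (toOnePlusIdeal hvt ht x)) :=
  rfl

theorem ker_toQuotientOnePlusIdeal (hn : 1 ≤ n) (hζ : (ζ : M) ≠ 1) :
    (toQuotientOnePlusIdeal hvt ht hn).ker =
      (integersAddSubgroup v).addSubgroupOf (scaledIntegers v ζ) := by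
  ext x
  have hs : 0 < v (((ζ : M) - 1) ^ (n + 1)) :=
    (Valuation.pos_iff v).2 (pow_ne_zero _ (sub_ne_zero.2 hζ))
  rw [AddMonoidHom.mem_ker, AddSubgroup.mem_addSubgroupOf, toQuotientOnePlusIdeal_apply,
    ofMul_eq_zero, ← QuotientGroup.mk_one, eq_comm, onePlusIdeal.mk_eq_mk_iff]
  simp only [coe_toOnePlusIdeal, OneMemClass.coe_one, Units.val_one, add_sub_cancel_left,
    map_mul]
  push_cast
  exact mul_le_iff_le_one_right hs

theorem toQuotientOnePlusIdeal_surjective (hn : 1 ≤ n) (hζ : (ζ : M) ≠ 1) :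
    Function.Surjective (toQuotientOnePlusIdeal hvt ht hn) := by
  intro q
  obtain ⟨w, hw⟩ := QuotientGroup.mk_surjective q.toMul
  obtain ⟨a, ha⟩ := w.2
  refine ⟨⟨_, mul_div_sub_one_pow_succ_mem_scaledIntegers hvt hζ a⟩, ?_⟩
  rw [toQuotientOnePlusIdeal_apply, (toOnePlusIdeal_eq_iff hvt ht _ w).2, hw]
  · rfl
  rw [ha]
  push_cast
  field_simp [sub_ne_zero.2 hζ]

theorem exists_mulEquiv_quotient_onePlusIdeal (hvt : v (((ζ : M) - 1) ^ n) = v (t : M))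
    (ht : v (t : M) < 1) (hn : 1 ≤ n) (hζ : (ζ : M) ≠ 1) :
    ∃ φ : Multiplicative (scaledIntegers v (ζ : M) ⧸
          (integersAddSubgroup v).addSubgroupOf (scaledIntegers v (ζ : M))) ≃*
        (onePlusIdeal v t ⧸ (onePlusIdeal v ((ζ - 1) ^ (n + 1))).subgroupOf (onePlusIdeal v t)),
      ∀ (x : scaledIntegers v (ζ : M)) (u : onePlusIdeal v t),
        (((u : (v.valuationSubring)ˣ) : v.valuationSubring) : M) =
            1 + ((ζ : M) - 1) ^ (n + 1) * (x : M) →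
          φ (Multiplicative.ofAdd (QuotientAddGroup.mk x)) = QuotientGroup.mk u := by
  refine ⟨AddEquiv.toMultiplicativeLeft <|
    (QuotientAddGroup.quotientAddEquivOfEq (ker_toQuotientOnePlusIdeal hvt ht hn hζ).symm).trans
      (QuotientAddGroup.quotientKerEquivOfSurjective _
        (toQuotientOnePlusIdeal_surjective hvt ht hn hζ)),
    fun x u hu => ?_⟩
  rw [← (toOnePlusIdeal_eq_iff hvt ht x u).2 hu]
  rfl

end QuotientIso

theorem onePlus_quotient_mulEquiv_general
    (M : Type*) [Field M] (vM : Valuation M ℤₘ₀)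
    (p : ℕ) (hp : p.Prime)
    (hres : CharP (ResidueField vM.valuationSubring) p)
    (ζ : vM.valuationSubring) (hζ : IsPrimitiveRoot (ζ : M) p) :
    ∃ φ : Multiplicative
        (scaledIntegers vM (ζ : M) ⧸
          (integersAddSubgroup vM).addSubgroupOf (scaledIntegers vM (ζ : M))) ≃*
        (onePlusIdeal vM (p : vM.valuationSubring) ⧸
          (onePlusIdeal vM ((ζ - 1) ^ p)).subgroupOf (onePlusIdeal vM (p : vM.valuationSubring))),
      ∀ (x : scaledIntegers vM (ζ : M))
        (u : onePlusIdeal vM (p : vM.valuationSubring)),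
        ((((u : (vM.valuationSubring)ˣ) : vM.valuationSubring)) : M)
            = 1 + ((ζ : M) - 1) ^ p * (x : M) →
          φ (Multiplicative.ofAdd (QuotientAddGroup.mk x)) = QuotientGroup.mk u := by
  have hvp : vM ((p : vM.valuationSubring) : M) < 1 := by
    rw [← Valuation.mem_maximalIdeal_iff, ← residue_eq_zero_iff, map_natCast,
      CharP.cast_eq_zero]
  have hvζ := hζ.valuation_sub_one_pow_eq (v := vM) hp ζ.2
  obtain ⟨n, rfl⟩ : ∃ n, p = n + 1 := ⟨p - 1, (Nat.sub_add_cancel hp.one_le).symm⟩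
  rw [Nat.add_sub_cancel] at hvζ
  exact exists_mulEquiv_quotient_onePlusIdeal (by exact_mod_cast hvζ) hvp
    (Nat.le_of_lt_succ hp.one_lt) (hζ.ne_one hp.one_lt)

/-- The isomorphism `(ζ_p - 1)⁻¹𝒪_M/𝒪_M ≃ (1 + p𝒪_M)/(1 + (ζ_p - 1)^p 𝒪_M)`,
`x ↦ 1 + (ζ_p - 1)^p x`, for a complete discrete valuation field `M` of mixed
characteristic `(0, p)` containing a primitive `p`-th root of unity `ζ_p`. -/
theorem onePlus_quotient_mulEquiv
    (M : Type*) [Field M] [CharZero M] (vM : Valuation M ℤₘ₀)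
    (hsurj : Function.Surjective vM)
    (hcompl : IsAdicComplete (maximalIdeal vM.valuationSubring) vM.valuationSubring)
    (p : ℕ) (hp : p.Prime)
    (hres : CharP (ResidueField vM.valuationSubring) p)
    (ζ : vM.valuationSubring) (hζ : IsPrimitiveRoot (ζ : M) p) :
    ∃ φ : Multiplicative
        (scaledIntegers vM (ζ : M) ⧸
          (integersAddSubgroup vM).addSubgroupOf (scaledIntegers vM (ζ : M))) ≃*
        (onePlusIdeal vM (p : vM.valuationSubring) ⧸
          (onePlusIdeal vM ((ζ - 1) ^ p)).subgroupOf (onePlusIdeal vM (p : vM.valuationSubring))),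
      ∀ (x : scaledIntegers vM (ζ : M))
        (u : onePlusIdeal vM (p : vM.valuationSubring)),
        ((((u : (vM.valuationSubring)ˣ) : vM.valuationSubring)) : M)
            = 1 + ((ζ : M) - 1) ^ p * (x : M) →
          φ (Multiplicative.ofAdd (QuotientAddGroup.mk x)) = QuotientGroup.mk u :=
  onePlus_quotient_mulEquiv_general M vM p hp hres ζ hζ
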